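/- Let S^{(3)}_{4+} be the 3-uniform hypergraph consisting of four edges that all contain one common vertex u and are otherwise pairwise disjoint, together with a fifth edge that intersects exactly one of these four edges, in exactly one vertex different from u, and is disjoint from the other three. Then ρ(S^{(3)}_{4+}) > 2·(2+√5)^{1/3}. -/

import Mathlib

open Finset

/-- A hypergraph on vertex type `V`, given by its finite set of edges. -/
structure FinsetHypergraph (V : Type) [DecidableEq V] where
  edges : Finset (Finset V)

namespace FinsetHypergraph

variable {V : Type} [DecidableEq V]

/-- The vertex set of `H`: all vertices lying in some edge. -/
def vertexSet (H : FinsetHypergraph V) : Finset V := H.edges.biUnion id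

/-- `H` is `r`-uniform: every edge has exactly `r` vertices. -/
def IsUniform (H : FinsetHypergraph V) (r : ℕ) : Prop := ∀ e ∈ H.edges, e.card = r

/-- The degree of a vertex: the number of edges containing it. -/
def degree (H : FinsetHypergraph V) (v : V) : ℕ := (H.edges.filter fun e => v ∈ e).card

/-- The spectral radius of an `r`-uniform hypergraph `H`:
`ρ(H) = r! · max{ (∑_{e ∈ E} ∏_{v ∈ e} x_v) / (∑_v x_v ^ r) : x ≥ 0, x ≠ 0 }`. -/
noncomputable def spectralRadius (H : FinsetHypergraph V) (r : ℕ) : ℝ :=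
  (Nat.factorial r : ℝ) *
    sSup {t : ℝ | ∃ x : V → ℝ, (∀ v, 0 ≤ x v) ∧ (∃ v ∈ H.vertexSet, x v ≠ 0) ∧
      t = (∑ e ∈ H.edges, ∏ v ∈ e, x v) / (∑ v ∈ H.vertexSet, x v ^ r)}

/-- `v, e` form a walk `v 0, e 0, v 1, e 1, …, e (l-1), v l` in `H`. -/
def IsWalkSeq (H : FinsetHypergraph V) {l : ℕ} (v : Fin (l + 1) → V) (e : Fin l → Finset V) : Prop :=
  ∀ i : Fin l, e i ∈ H.edges ∧ v i.castSucc ∈ e i ∧ v i.succ ∈ e i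

/-- `H` is connected: every two vertices are joined by a walk. -/
def Connected (H : FinsetHypergraph V) : Prop :=
  ∀ u ∈ H.vertexSet, ∀ w ∈ H.vertexSet,
    ∃ (l : ℕ) (v : Fin (l + 1) → V) (e : Fin l → Finset V),
      H.IsWalkSeq v e ∧ v 0 = u ∧ v (Fin.last l) = w

/-- The cyclic successor on `Fin l`. -/
def cyc {l : ℕ} (i : Fin l) : Fin l := ⟨((i : ℕ) + 1) % l, Nat.mod_lt _ i.pos⟩

/-- `v, e` form a cycle `v 0, e 0, v 1, e 1, …, e (l-1), v 0` of length `l` in `H`,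
with all vertices and all edges distinct. -/
def IsCycleSeq (H : FinsetHypergraph V) {l : ℕ} (v : Fin l → V) (e : Fin l → Finset V) : Prop :=
  Function.Injective v ∧ Function.Injective e ∧
    ∀ i : Fin l, e i ∈ H.edges ∧ v i ∈ e i ∧ v (cyc i) ∈ e i

/-- `H` contains a cycle. -/
def HasCycle (H : FinsetHypergraph V) : Prop :=
  ∃ l : ℕ, 2 ≤ l ∧ ∃ (v : Fin l → V) (e : Fin l → Finset V), H.IsCycleSeq v e

/-- A hypertree: connected and acyclic. -/
def IsHypertree (H : FinsetHypergraph V) : Prop := H.Connected ∧ ¬H.HasCycle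

/-- `H` is irreducible: some edge has all of its vertices of degree at least `2`. -/
def Irreducible (H : FinsetHypergraph V) : Prop := ∃ e ∈ H.edges, ∀ v ∈ e, 2 ≤ H.degree v

/-- The `r`-uniform edge-star `S_r^{(r)}`: edges `F_0 = {v 0, …, v (r-1)}` and
`F_1, …, F_r` with `F_i ∩ F_0 = {v i}` and `F_i ∩ F_j = ∅` for `i ≠ j`. -/
def IsEdgeStar (H : FinsetHypergraph V) (r : ℕ) : Prop :=
  H.IsUniform r ∧
    ∃ (v : Fin r → V) (F : Fin r → Finset V),
      Function.Injective v ∧ Finset.univ.image v ∈ H.edges ∧ (∀ i, F i ∈ H.edges) ∧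
      (∀ i, F i ∩ Finset.univ.image v = {v i}) ∧
      (∀ i j, i ≠ j → F i ∩ F j = ∅) ∧
      H.edges = insert (Finset.univ.image v) (Finset.univ.image F)

/-- The `r`-uniform star with `k` edges: `k` edges through a common vertex `u`,
otherwise pairwise disjoint. -/
def IsStar (H : FinsetHypergraph V) (r k : ℕ) : Prop :=
  H.IsUniform r ∧
    ∃ (u : V) (F : Fin k → Finset V),
      Function.Injective F ∧ (∀ i, F i ∈ H.edges) ∧ (∀ i, u ∈ F i) ∧
      (∀ i j, i ≠ j → F i ∩ F j = {u}) ∧ H.edges = Finset.univ.image F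

/-- `S^{(3)}_{4+}`: four 3-edges through a common vertex `u` (otherwise pairwise
disjoint) plus a fifth edge meeting exactly one of them in exactly one vertex `w ≠ u`
and disjoint from the other three. -/
def IsS34plus (H : FinsetHypergraph V) : Prop :=
  H.IsUniform 3 ∧
    ∃ (u w : V) (F : Fin 4 → Finset V) (g : Finset V),
      Function.Injective F ∧ (∀ i, F i ∈ H.edges) ∧ g ∈ H.edges ∧
      (∀ i, u ∈ F i) ∧ (∀ i j, i ≠ j → F i ∩ F j = {u}) ∧
      w ≠ u ∧ w ∈ F 0 ∧ g ∩ F 0 = {w} ∧ (∀ i, i ≠ 0 → g ∩ F i = ∅) ∧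
      H.edges = insert g (Finset.univ.image F)

end FinsetHypergraph

open FinsetHypergraph

section Aux

lemma prod3' {V : Type} [DecidableEq V] (x : V → ℝ) {p q r : V}
    (h1 : p ≠ q) (h2 : p ≠ r) (h3 : q ≠ r) :
    ∏ v ∈ ({p, q, r} : Finset V), x v = x p * x q * x r := by
  rw [Finset.prod_insert (by simp [h1, h2]), Finset.prod_insert (by simp [h3]),
    Finset.prod_singleton, mul_assoc]

lemma sum3' {V : Type} [DecidableEq V] (x : V → ℝ) {p q r : V}
    (h1 : p ≠ q) (h2 : p ≠ r) (h3 : q ≠ r) :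
    ∑ v ∈ ({p, q, r} : Finset V), x v ^ 3 = x p ^ 3 + x q ^ 3 + x r ^ 3 := by
  rw [Finset.sum_insert (by simp [h1, h2]), Finset.sum_insert (by simp [h3]),
    Finset.sum_singleton, add_assoc]

lemma prod_le_sum_cube' {V : Type} [DecidableEq V] (e : Finset V) (he : e.card = 3)
    (x : V → ℝ) (hx : ∀ v, 0 ≤ x v) :
    (∏ v ∈ e, x v) ≤ ∑ v ∈ e, x v ^ 3 := by
  obtain ⟨a, b, c, hab, hac, hbc, rfl⟩ := Finset.card_eq_three.mp he
  rw [prod3' x hab hac hbc, sum3' x hab hac hbc]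
  nlinarith [hx a, hx b, hx c, sq_nonneg (x a - x b), sq_nonneg (x b - x c),
    sq_nonneg (x a - x c), mul_nonneg (mul_nonneg (hx a) (hx b)) (hx c)]

lemma extract2' {V : Type} [DecidableEq V] {e : Finset V} {u : V} (h3 : e.card = 3)
    (hu : u ∈ e) : ∃ b c, b ≠ c ∧ b ≠ u ∧ c ≠ u ∧ e = {u, b, c} := by
  have h2 : (e.erase u).card = 2 := by rw [Finset.card_erase_of_mem hu, h3]
  obtain ⟨b, c, hbc, hbcin⟩ := Finset.card_eq_two.mp h2
  have hb : b ∈ e.erase u := by rw [hbcin]; simp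
  have hc : c ∈ e.erase u := by rw [hbcin]; simp
  refine ⟨b, c, hbc, (Finset.mem_erase.mp hb).1, (Finset.mem_erase.mp hc).1, ?_⟩
  rw [← hbcin, Finset.insert_erase hu]

lemma extract3' {V : Type} [DecidableEq V] {e : Finset V} {u w : V} (h3 : e.card = 3)
    (hu : u ∈ e) (hw : w ∈ e) (huw : u ≠ w) :
    ∃ a, a ≠ u ∧ a ≠ w ∧ e = {u, w, a} := by
  have hw' : w ∈ e.erase u := Finset.mem_erase.mpr ⟨Ne.symm huw, hw⟩
  have h1 : ((e.erase u).erase w).card = 1 := by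
    rw [Finset.card_erase_of_mem hw', Finset.card_erase_of_mem hu, h3]
  obtain ⟨a, ha⟩ := Finset.card_eq_one.mp h1
  have hain : a ∈ (e.erase u).erase w := by rw [ha]; simp
  have h1' := Finset.mem_erase.mp hain
  have h2' := Finset.mem_erase.mp h1'.2
  refine ⟨a, h2'.1, h1'.1, ?_⟩
  rw [show ({u, w, a} : Finset V) = insert u (insert w {a}) from rfl, ← ha,
    Finset.insert_erase hw', Finset.insert_erase hu]

lemma mem_vertexSet' {V : Type} [DecidableEq V] {H : FinsetHypergraph V} {v : V} :
    v ∈ H.vertexSet ↔ ∃ e ∈ H.edges, v ∈ e := by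
  simp [FinsetHypergraph.vertexSet]

lemma specset_bddAbove {V : Type} [DecidableEq V] (H : FinsetHypergraph V) (hu : H.IsUniform 3) :
    BddAbove {t : ℝ | ∃ x : V → ℝ, (∀ v, 0 ≤ x v) ∧ (∃ v ∈ H.vertexSet, x v ≠ 0) ∧
      t = (∑ e ∈ H.edges, ∏ v ∈ e, x v) / (∑ v ∈ H.vertexSet, x v ^ 3)} := by
  refine ⟨(H.edges.card : ℝ), ?_⟩
  rintro t ⟨x, hx, ⟨v0, hv0, hv0ne⟩, rfl⟩
  have hv0pos : 0 < x v0 := lt_of_le_of_ne (hx v0) (Ne.symm hv0ne)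
  have hD : 0 < ∑ v ∈ H.vertexSet, x v ^ 3 :=
    Finset.sum_pos' (fun v _ => pow_nonneg (hx v) 3) ⟨v0, hv0, pow_pos hv0pos 3⟩
  rw [div_le_iff₀ hD]
  calc ∑ e ∈ H.edges, ∏ v ∈ e, x v
      ≤ ∑ _e ∈ H.edges, ∑ v ∈ H.vertexSet, x v ^ 3 := by
        refine Finset.sum_le_sum fun e he => ?_
        refine (prod_le_sum_cube' e (hu e he) x hx).trans ?_
        exact Finset.sum_le_sum_of_subset_of_nonneg
          (fun v hv => mem_vertexSet'.mpr ⟨e, he, hv⟩) (fun v _ _ => pow_nonneg (hx v) 3)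
    _ = H.edges.card * ∑ v ∈ H.vertexSet, x v ^ 3 := by
        rw [Finset.sum_const, nsmul_eq_mul]

end Aux


/-- `S^{(3)}_{4+}` has spectral radius greater than `2·(2+√5)^{1/3}`. -/
theorem s34plus_spectralRadius_gt {V : Type} [DecidableEq V] (H : FinsetHypergraph V)
    (hH : H.IsS34plus) :
    2 * (2 + Real.sqrt 5) ^ ((1 : ℝ) / 3) < H.spectralRadius 3 := by
  obtain ⟨hu3, u, w, F, g, hFinj, hFmem, hgmem, huF, hFij, hwu, hwF0, hgF0, hgFi, hedges⟩ := hH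
  obtain ⟨a, hau, haw, hF0⟩ := extract3' (hu3 _ (hFmem 0)) (huF 0) hwF0 (Ne.symm hwu)
  obtain ⟨b1, c1, hb1c1, hb1u, hc1u, hF1⟩ := extract2' (hu3 _ (hFmem 1)) (huF 1)
  obtain ⟨b2, c2, hb2c2, hb2u, hc2u, hF2⟩ := extract2' (hu3 _ (hFmem 2)) (huF 2)
  obtain ⟨b3, c3, hb3c3, hb3u, hc3u, hF3⟩ := extract2' (hu3 _ (hFmem 3)) (huF 3)
  have hwg : w ∈ g := by
    have h : w ∈ g ∩ F 0 := by rw [hgF0]; exact Finset.mem_singleton_self w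
    exact (Finset.mem_inter.mp h).1
  obtain ⟨m1, m2, hm12, hm1w, hm2w, hg⟩ := extract2' (hu3 _ hgmem) hwg
  -- generic non-membership facts
  have hnotF : ∀ z (i j : Fin 4), z ∈ F i → z ≠ u → i ≠ j → z ∉ F j := by
    intro z i j hzi hzu hij hzj
    have h : z ∈ F i ∩ F j := Finset.mem_inter.mpr ⟨hzi, hzj⟩
    rw [hFij i j hij] at h
    exact hzu (Finset.mem_singleton.mp h)
  have hnotg : ∀ z (i : Fin 4), i ≠ 0 → z ∈ F i → z ∉ g := by
    intro z i hi hzi hzg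
    have h : z ∈ g ∩ F i := Finset.mem_inter.mpr ⟨hzg, hzi⟩
    rw [hgFi i hi] at h
    exact absurd h (Finset.notMem_empty z)
  have hgnotF0 : ∀ z, z ∈ g → z ≠ w → z ∉ F 0 := by
    intro z hzg hzw hz0
    have h : z ∈ g ∩ F 0 := Finset.mem_inter.mpr ⟨hzg, hz0⟩
    rw [hgF0] at h
    exact hzw (Finset.mem_singleton.mp h)
  have hnotg0 : ∀ z, z ∈ F 0 → z ≠ w → z ∉ g := by
    intro z hz hzw hzg
    have h : z ∈ g ∩ F 0 := Finset.mem_inter.mpr ⟨hzg, hz⟩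
    rw [hgF0] at h
    exact hzw (Finset.mem_singleton.mp h)
  -- memberships
  have haF0 : a ∈ F 0 := by rw [hF0]; simp
  have hb1m : b1 ∈ F 1 := by rw [hF1]; simp
  have hc1m : c1 ∈ F 1 := by rw [hF1]; simp
  have hb2m : b2 ∈ F 2 := by rw [hF2]; simp
  have hc2m : c2 ∈ F 2 := by rw [hF2]; simp
  have hb3m : b3 ∈ F 3 := by rw [hF3]; simp
  have hc3m : c3 ∈ F 3 := by rw [hF3]; simp
  have hm1g : m1 ∈ g := by rw [hg]; simp
  have hm2g : m2 ∈ g := by rw [hg]; simp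
  -- not-in-F0 facts
  have hb1F0 : b1 ∉ F 0 := hnotF b1 1 0 hb1m hb1u (by decide)
  have hc1F0 : c1 ∉ F 0 := hnotF c1 1 0 hc1m hc1u (by decide)
  have hb2F0 : b2 ∉ F 0 := hnotF b2 2 0 hb2m hb2u (by decide)
  have hc2F0 : c2 ∉ F 0 := hnotF c2 2 0 hc2m hc2u (by decide)
  have hb3F0 : b3 ∉ F 0 := hnotF b3 3 0 hb3m hb3u (by decide)
  have hc3F0 : c3 ∉ F 0 := hnotF c3 3 0 hc3m hc3u (by decide)
  have hm1F0 : m1 ∉ F 0 := hgnotF0 m1 hm1g hm1w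
  have hm2F0 : m2 ∉ F 0 := hgnotF0 m2 hm2g hm2w
  -- derived disequalities with w
  have hb1w : b1 ≠ w := fun h => hb1F0 (h ▸ hwF0)
  have hc1w : c1 ≠ w := fun h => hc1F0 (h ▸ hwF0)
  have hb2w : b2 ≠ w := fun h => hb2F0 (h ▸ hwF0)
  have hc2w : c2 ≠ w := fun h => hc2F0 (h ▸ hwF0)
  have hb3w : b3 ≠ w := fun h => hb3F0 (h ▸ hwF0)
  have hc3w : c3 ≠ w := fun h => hc3F0 (h ▸ hwF0)
  have hm1u : m1 ≠ u := fun h => hm1F0 (h ▸ huF 0)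
  have hm2u : m2 ≠ u := fun h => hm2F0 (h ▸ huF 0)
  -- not in g
  have hb1g : b1 ∉ g := hnotg b1 1 (by decide) hb1m
  have hc1g : c1 ∉ g := hnotg c1 1 (by decide) hc1m
  have hb2g : b2 ∉ g := hnotg b2 2 (by decide) hb2m
  have hc2g : c2 ∉ g := hnotg c2 2 (by decide) hc2m
  have hb3g : b3 ∉ g := hnotg b3 3 (by decide) hb3m
  have hc3g : c3 ∉ g := hnotg c3 3 (by decide) hc3m
  have hug : u ∉ g := hnotg u 1 (by decide) (huF 1)
  have hgim : g ∉ Finset.univ.image F := by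
    simp only [Finset.mem_image]
    rintro ⟨i, -, rfl⟩
    exact hug (huF i)
  -- the weight function
  set x : V → ℝ := fun v =>
    if v = u then 200 else if v = w then 146 else if v ∈ F 0 then 134
    else if v ∈ g then 90 else 123 with hxdef
  have hxnn : ∀ v, 0 ≤ x v := by
    intro v; rw [hxdef]; dsimp only; split_ifs <;> norm_num
  have hxu : x u = 200 := by rw [hxdef]; simp
  have hxw : x w = 146 := by rw [hxdef]; simp [hwu]
  have hxa : x a = 134 := by rw [hxdef]; simp [hau, haw, haF0]
  have hxb1 : x b1 = 123 := by rw [hxdef]; simp [hb1u, hb1w, hb1F0, hb1g]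
  have hxc1 : x c1 = 123 := by rw [hxdef]; simp [hc1u, hc1w, hc1F0, hc1g]
  have hxb2 : x b2 = 123 := by rw [hxdef]; simp [hb2u, hb2w, hb2F0, hb2g]
  have hxc2 : x c2 = 123 := by rw [hxdef]; simp [hc2u, hc2w, hc2F0, hc2g]
  have hxb3 : x b3 = 123 := by rw [hxdef]; simp [hb3u, hb3w, hb3F0, hb3g]
  have hxc3 : x c3 = 123 := by rw [hxdef]; simp [hc3u, hc3w, hc3F0, hc3g]
  have hxm1 : x m1 = 90 := by rw [hxdef]; simp [hm1u, hm1w, hm1F0, hm1g]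
  have hxm2 : x m2 = 90 := by rw [hxdef]; simp [hm2u, hm2w, hm2F0, hm2g]
  -- numerator
  have hNum : (∑ e ∈ H.edges, ∏ v ∈ e, x v) = 14172800 := by
    rw [hedges, Finset.sum_insert hgim,
      Finset.sum_image (fun i _ j _ h => hFinj h), Fin.sum_univ_four,
      hg, hF0, hF1, hF2, hF3,
      prod3' x (Ne.symm hm1w) (Ne.symm hm2w) hm12,
      prod3' x (Ne.symm hwu) (Ne.symm hau) (Ne.symm haw),
      prod3' x (Ne.symm hb1u) (Ne.symm hc1u) hb1c1,
      prod3' x (Ne.symm hb2u) (Ne.symm hc2u) hb2c2,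
      prod3' x (Ne.symm hb3u) (Ne.symm hc3u) hb3c3,
      hxu, hxw, hxa, hxb1, hxc1, hxb2, hxc2, hxb3, hxc3, hxm1, hxm2]
    norm_num
  -- vertex set decomposition
  have hVS : H.vertexSet =
      F 0 ∪ ((F 1).erase u ∪ ((F 2).erase u ∪ ((F 3).erase u ∪ g.erase w))) := by
    ext z
    simp only [mem_vertexSet', hedges, Finset.mem_insert, Finset.mem_union,
      Finset.mem_erase, Finset.mem_image]
    constructor
    · rintro ⟨e, he, hze⟩
      rcases he with rfl | ⟨i, -, rfl⟩
      · by_cases hzw : z = w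
        · subst hzw; exact Or.inl hwF0
        · exact Or.inr (Or.inr (Or.inr (Or.inr ⟨hzw, hze⟩)))
      · by_cases hzu : z = u
        · subst hzu; exact Or.inl (huF 0)
        · fin_cases i
          · exact Or.inl hze
          · exact Or.inr (Or.inl ⟨hzu, hze⟩)
          · exact Or.inr (Or.inr (Or.inl ⟨hzu, hze⟩))
          · exact Or.inr (Or.inr (Or.inr (Or.inl ⟨hzu, hze⟩)))
    · rintro (h | ⟨-, h⟩ | ⟨-, h⟩ | ⟨-, h⟩ | ⟨-, h⟩)
      exacts [⟨F 0, Or.inr ⟨0, Finset.mem_univ _, rfl⟩, h⟩,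
        ⟨F 1, Or.inr ⟨1, Finset.mem_univ _, rfl⟩, h⟩,
        ⟨F 2, Or.inr ⟨2, Finset.mem_univ _, rfl⟩, h⟩,
        ⟨F 3, Or.inr ⟨3, Finset.mem_univ _, rfl⟩, h⟩,
        ⟨g, Or.inl rfl, h⟩]
  -- disjointness
  have dFF : ∀ i j : Fin 4, i ≠ j → Disjoint ((F i).erase u) ((F j).erase u) := by
    intro i j hij
    rw [Finset.disjoint_left]
    intro z hz hz'
    obtain ⟨hzu, hzi⟩ := Finset.mem_erase.mp hz
    exact hnotF z i j hzi hzu hij (Finset.mem_erase.mp hz').2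
  have dFg : ∀ i : Fin 4, i ≠ 0 → Disjoint ((F i).erase u) (g.erase w) := by
    intro i hi
    rw [Finset.disjoint_left]
    intro z hz hz'
    exact hnotg z i hi (Finset.mem_erase.mp hz).2 (Finset.mem_erase.mp hz').2
  have dF0F : ∀ i : Fin 4, i ≠ 0 → Disjoint (F 0) ((F i).erase u) := by
    intro i hi
    rw [Finset.disjoint_left]
    intro z hz hz'
    obtain ⟨hzu, hzi⟩ := Finset.mem_erase.mp hz'
    exact hnotF z i 0 hzi hzu hi hz
  have dF0g : Disjoint (F 0) (g.erase w) := by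
    rw [Finset.disjoint_left]
    intro z hz hz'
    obtain ⟨hzw, hzg⟩ := Finset.mem_erase.mp hz'
    exact hnotg0 z hz hzw hzg
  have d1 : Disjoint (F 0) ((F 1).erase u ∪ ((F 2).erase u ∪ ((F 3).erase u ∪ g.erase w))) :=
    Finset.disjoint_union_right.mpr ⟨dF0F 1 (by decide), Finset.disjoint_union_right.mpr
      ⟨dF0F 2 (by decide), Finset.disjoint_union_right.mpr ⟨dF0F 3 (by decide), dF0g⟩⟩⟩
  have d2 : Disjoint ((F 1).erase u) ((F 2).erase u ∪ ((F 3).erase u ∪ g.erase w)) :=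
    Finset.disjoint_union_right.mpr ⟨dFF 1 2 (by decide), Finset.disjoint_union_right.mpr
      ⟨dFF 1 3 (by decide), dFg 1 (by decide)⟩⟩
  have d3 : Disjoint ((F 2).erase u) ((F 3).erase u ∪ g.erase w) :=
    Finset.disjoint_union_right.mpr ⟨dFF 2 3 (by decide), dFg 2 (by decide)⟩
  have d4 : Disjoint ((F 3).erase u) (g.erase w) := dFg 3 (by decide)
  -- erase forms
  have hE1 : (F 1).erase u = {b1, c1} := by
    rw [hF1]
    exact Finset.erase_insert (by simp [Ne.symm hb1u, Ne.symm hc1u])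
  have hE2 : (F 2).erase u = {b2, c2} := by
    rw [hF2]
    exact Finset.erase_insert (by simp [Ne.symm hb2u, Ne.symm hc2u])
  have hE3 : (F 3).erase u = {b3, c3} := by
    rw [hF3]
    exact Finset.erase_insert (by simp [Ne.symm hb3u, Ne.symm hc3u])
  have hEg : g.erase w = {m1, m2} := by
    rw [hg]
    exact Finset.erase_insert (by simp [Ne.symm hm1w, Ne.symm hm2w])
  -- denominator
  have hDen : (∑ v ∈ H.vertexSet, x v ^ 3) = 26141442 := by
    rw [hVS, Finset.sum_union d1, Finset.sum_union d2, Finset.sum_union d3,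
      Finset.sum_union d4, hF0, hE1, hE2, hE3, hEg,
      sum3' x (Ne.symm hwu) (Ne.symm hau) (Ne.symm haw),
      Finset.sum_pair hb1c1, Finset.sum_pair hb2c2, Finset.sum_pair hb3c3,
      Finset.sum_pair hm12,
      hxu, hxw, hxa, hxb1, hxc1, hxb2, hxc2, hxb3, hxc3, hxm1, hxm2]
    norm_num
  -- membership in the sup set
  have hu_vs : u ∈ H.vertexSet := mem_vertexSet'.mpr ⟨F 0, hFmem 0, huF 0⟩
  have hmem : ((14172800 : ℝ) / 26141442) ∈ {t : ℝ | ∃ x : V → ℝ, (∀ v, 0 ≤ x v) ∧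
      (∃ v ∈ H.vertexSet, x v ≠ 0) ∧
      t = (∑ e ∈ H.edges, ∏ v ∈ e, x v) / (∑ v ∈ H.vertexSet, x v ^ 3)} :=
    ⟨x, hxnn, ⟨u, hu_vs, by rw [hxu]; norm_num⟩, by rw [hNum, hDen]⟩
  have key : ((14172800 : ℝ) / 26141442) ≤ sSup {t : ℝ | ∃ x : V → ℝ, (∀ v, 0 ≤ x v) ∧
      (∃ v ∈ H.vertexSet, x v ≠ 0) ∧
      t = (∑ e ∈ H.edges, ∏ v ∈ e, x v) / (∑ v ∈ H.vertexSet, x v ^ 3)} :=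
    le_csSup (specset_bddAbove H hu3) hmem
  -- the cube root bound
  have hc : (2 + Real.sqrt 5) ^ ((1 : ℝ) / 3) < 81 / 50 := by
    have h5 : Real.sqrt 5 < 2.251528 := by
      rw [show (2.251528 : ℝ) = Real.sqrt (2.251528 ^ 2) by
        rw [Real.sqrt_sq (by norm_num)]]
      exact Real.sqrt_lt_sqrt (by norm_num) (by norm_num)
    have hbase : (2 + Real.sqrt 5) < ((81 : ℝ) / 50) ^ (3 : ℕ) := by
      norm_num
      nlinarith [h5]
    calc (2 + Real.sqrt 5) ^ ((1 : ℝ) / 3)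
        < (((81 : ℝ) / 50) ^ (3 : ℕ)) ^ ((1 : ℝ) / 3) :=
          Real.rpow_lt_rpow (by positivity) hbase (by norm_num)
      _ = 81 / 50 := by
          rw [← Real.rpow_natCast ((81 : ℝ) / 50) 3, ← Real.rpow_mul (by norm_num)]
          norm_num
  rw [FinsetHypergraph.spectralRadius, show ((Nat.factorial 3 : ℕ) : ℝ) = 6 by norm_num [Nat.factorial]]
  linarith [hc, key]
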